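/- For all real numbers ω_c, ω_m, I, and t, the family (J_n(I)·sin((ω_c + n·ω_m)·t))_{n ∈ ℤ} is summable in ℝ with sum sin(ω_c·t + I·sin(ω_m·t)). That is, the frequency-modulated signal sin(ω_c t + I sin(ω_m t)) decomposes as a convergent series of simple sinusoids with frequencies ω_c + n·ω_m weighted by Bessel coefficients. -/

import Mathlib

/-!
The map `θ ↦ exp (i x sin θ)` is smooth and `2π`-periodic, so integrating by parts twice shows
that its Fourier coefficients are `O(1/n²)`; hence its Fourier series converges to it pointwise.
Shifting the period to `[-π, π]`, where the phase `x sin θ - n θ` is odd, identifies the `n`-th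
coefficient with `J_n(x)`. This is the Jacobi–Anger expansion
`exp (i x sin θ) = ∑ J_n(x) exp (i n θ)`; at `θ = ω_m t`, multiplied by `exp (i ω_c t)`,
its imaginary part is the theorem.
-/

open Real

/-- The Bessel function of the first kind of integer order `n`, via the
integral representation `J_n(x) = (1/π) ∫_0^π cos(n·θ − x·sin θ) dθ`. -/
noncomputable def besselJ (n : ℤ) (x : ℝ) : ℝ :=
  (1 / Real.pi) * ∫ θ in (0:ℝ)..Real.pi, Real.cos (n * θ - x * Real.sin θ)

open Complex MeasureTheory Set Function
open scoped Interval

theorem Function.Periodic.deriv {𝕜 F : Type*} [NontriviallyNormedField 𝕜] [NormedAddCommGroup F]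
    [NormedSpace 𝕜 F] {f : 𝕜 → F} {T : 𝕜} (h : Periodic f T) : Periodic (deriv f) T := by
  intro x
  rw [← deriv_comp_add_const, show (fun y => f (y + T)) = f from funext h]

theorem Function.Periodic.fourierCoeffOn_eq_mul_fourierCoeffOn_deriv {T : ℝ} (hT : 0 < T)
    {g : ℝ → ℂ} (hper : Periodic g T) (hg : ContDiff ℝ 1 g) {n : ℤ} (hn : n ≠ 0) :
    fourierCoeffOn hT g n = T / (2 * π * I * n) * fourierCoeffOn hT (_root_.deriv g) n := by
  have hn' : (n : ℂ) ≠ 0 := Int.cast_ne_zero.mpr hn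
  have hgT : g T = g 0 := by simpa using hper 0
  rw [fourierCoeffOn_of_hasDerivAt hT hn (fun x _ => (hg.differentiable one_ne_zero x).hasDerivAt)
    ((hg.continuous_deriv le_rfl).intervalIntegrable _ _), hgT, sub_self, mul_zero, zero_sub,
    ofReal_zero, sub_zero]
  field_simp

theorem norm_fourierCoeffOn_le {a b : ℝ} (hab : a < b) {f : ℝ → ℂ} {M : ℝ}
    (hM : ∀ x ∈ Ioc a b, ‖f x‖ ≤ M) (n : ℤ) : ‖fourierCoeffOn hab f n‖ ≤ M := by
  have hba : 0 < b - a := sub_pos.mpr hab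
  rw [fourierCoeffOn_eq_integral, norm_smul, Real.norm_of_nonneg (by positivity)]
  have := intervalIntegral.norm_integral_le_of_norm_le_const (a := a) (b := b)
    (f := fun x => fourier (-n) (x : AddCircle (b - a)) • f x) (C := M) fun x hx => by
      rw [uIoc_of_le hab.le] at hx
      rw [norm_smul, fourier_apply, Circle.norm_coe, one_mul]
      exact hM x hx
  rw [abs_of_pos hba] at this
  calc 1 / (b - a) * _ ≤ 1 / (b - a) * (M * (b - a)) := by gcongr
    _ = M := by field_simp

theorem summable_fourierCoeffOn_of_contDiff {T : ℝ} (hT : 0 < T) {f : ℝ → ℂ}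
    (hf : ContDiff ℝ 2 f) (hper : Periodic f T) : Summable (fourierCoeffOn hT f) := by
  have hf' : ContDiff ℝ 1 (deriv f) := hf.deriv'
  obtain ⟨M, hM⟩ := isCompact_Icc.exists_bound_of_continuousOn
    (hf'.continuous_deriv le_rfl).continuousOn (s := Icc 0 T)
  have hdecay : ∀ n : ℤ, n ≠ 0 →
      ‖fourierCoeffOn hT f n‖ ≤ (T / (2 * π)) ^ 2 * M * (1 / (n : ℝ) ^ 2) := by
    intro n hn
    have hfactor : ‖(T : ℂ) / (2 * π * I * n)‖ = T / (2 * π) * (1 / |(n : ℝ)|) := by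
      rw [norm_div, norm_mul, norm_mul, norm_mul, Complex.norm_real, Complex.norm_real,
        norm_I, Complex.norm_intCast, Real.norm_of_nonneg hT.le, Real.norm_of_nonneg pi_pos.le,
        Complex.norm_two]
      field_simp
    rw [hper.fourierCoeffOn_eq_mul_fourierCoeffOn_deriv hT (hf.of_le one_le_two) hn,
      hper.deriv.fourierCoeffOn_eq_mul_fourierCoeffOn_deriv hT hf' hn, ← mul_assoc, norm_mul,
      norm_mul, hfactor]
    have hcoeff := norm_fourierCoeffOn_le hT (fun x hx => hM x (Ioc_subset_Icc_self hx)) n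
    calc _ ≤ T / (2 * π) * (1 / |(n : ℝ)|) * (T / (2 * π) * (1 / |(n : ℝ)|)) * M := by gcongr
      _ = _ := by rw [← sq_abs (n : ℝ)]; ring
  refine Summable.of_norm_bounded_eventually
    ((Real.summable_one_div_int_pow.mpr one_lt_two).mul_left ((T / (2 * π)) ^ 2 * M)) ?_
  filter_upwards [(Set.finite_singleton (0 : ℤ)).compl_mem_cofinite] with n hn
  exact hdecay n hn

theorem Function.Periodic.hasSum_fourier_series_of_summable {T : ℝ} (hT : 0 < T) {f : ℝ → ℂ}
    (hper : Periodic f T) (hf : Continuous f) (hsum : Summable (fourierCoeffOn hT f)) (x : ℝ) :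
    HasSum (fun n : ℤ => fourierCoeffOn hT f n * cexp (2 * π * I * n * x / T)) (f x) := by
  have : Fact (0 < T) := ⟨hT⟩
  let F : C(AddCircle T, ℂ) := ⟨hper.lift, continuous_coinduced_dom.mpr hf⟩
  have hcoeff : fourierCoeff F = fourierCoeffOn hT f := by
    ext n
    rw [fourierCoeff_eq_intervalIntegral _ n 0, fourierCoeffOn_eq_integral, sub_zero, zero_add]
    simp only [fourier_coe_apply, F, ContinuousMap.coe_mk, Periodic.lift_coe]
  have := has_pointwise_sum_fourier_series_of_summable (hcoeff ▸ hsum) (x : AddCircle T)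
  rw [hcoeff] at this
  simpa only [fourier_coe_apply, smul_eq_mul, F, ContinuousMap.coe_mk,
    Periodic.lift_coe] using this

theorem integral_exp_mul_I_of_odd {φ : ℝ → ℝ} (hφ : Continuous φ) (hodd : ∀ θ, φ (-θ) = -φ θ)
    (a : ℝ) : ∫ θ in -a..a, cexp (φ θ * I) = 2 * ∫ θ in 0..a, (Real.cos (φ θ) : ℂ) := by
  have hc : Continuous fun θ => cexp (φ θ * I) := by fun_prop
  have hflip : ∫ θ in -a..0, cexp (φ θ * I) = ∫ θ in 0..a, cexp (-(φ θ) * I) := by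
    simpa [hodd] using (intervalIntegral.integral_comp_neg (a := 0) (b := a)
      (fun θ => cexp (φ θ * I))).symm
  rw [← intervalIntegral.integral_add_adjacent_intervals (b := 0) (hc.intervalIntegrable _ _)
    (hc.intervalIntegrable _ _), hflip, ← intervalIntegral.integral_add
    ((by fun_prop : Continuous fun θ => cexp (-(φ θ) * I)).intervalIntegrable _ _)
    (hc.intervalIntegrable _ _), ← intervalIntegral.integral_const_mul]
  refine intervalIntegral.integral_congr fun θ _ => ?_
  simp only [ofReal_cos, two_cos]
  ring

theorem fourierCoeffOn_exp_mul_sin_eq_besselJ (x : ℝ) (n : ℤ) :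
    fourierCoeffOn two_pi_pos (fun θ => cexp (↑(x * Real.sin θ) * I)) n = besselJ n x := by
  let φ : ℝ → ℝ := fun θ => x * Real.sin θ - n * θ
  have hperiodic : Periodic (fun θ => cexp (φ θ * I)) (2 * π) := by
    intro θ
    have hφ : (φ (θ + 2 * π) : ℂ) * I = φ θ * I + (-n : ℤ) * (2 * π * I) := by
      push_cast [φ, Real.sin_add_two_pi]
      ring
    simp only [hφ, Complex.exp_add, exp_int_mul_two_pi_mul_I, mul_one]
  have hintegrand : ∀ θ : ℝ,
      fourier (-n) (θ : AddCircle (2 * π - 0)) • cexp (↑(x * Real.sin θ) * I) = cexp (φ θ * I) := by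
    intro θ
    have hphase : 2 * π * I * ↑(-n) * θ / ↑(2 * π) = -(n * θ : ℂ) * I := by
      push_cast
      field_simp
    rw [fourier_coe_apply, smul_eq_mul, ← Complex.exp_add, sub_zero, hphase]
    congr 1
    push_cast [φ]
    ring
  rw [fourierCoeffOn_eq_integral]
  simp only [hintegrand, sub_zero]
  have hshift := hperiodic.intervalIntegral_add_eq 0 (-π)
  rw [zero_add, show -π + 2 * π = π by ring] at hshift
  have hodd : ∀ θ, φ (-θ) = -φ θ := fun θ => by simp only [φ, Real.sin_neg]; ring
  rw [hshift, integral_exp_mul_I_of_odd (by fun_prop) hodd, besselJ]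
  have hcos : ∀ θ, Real.cos (φ θ) = Real.cos (n * θ - x * Real.sin θ) := fun θ => by
    rw [← Real.cos_neg, neg_sub]
  simp only [hcos, intervalIntegral.integral_ofReal, real_smul]
  push_cast
  field_simp

theorem hasSum_besselJ_mul_exp (x θ : ℝ) :
    HasSum (fun n : ℤ => besselJ n x * cexp (↑(n * θ) * I)) (cexp (↑(x * Real.sin θ) * I)) := by
  have hper : Periodic (fun θ : ℝ => cexp (↑(x * Real.sin θ) * I)) (2 * π) := fun θ => by
    simp only [Real.sin_add_two_pi]
  have hsmooth : ContDiff ℝ 2 (fun θ : ℝ => cexp (↑(x * Real.sin θ) * I)) :=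
    ((ofRealCLM.contDiff.comp (contDiff_const.mul contDiff_sin)).mul contDiff_const).cexp
  have := hper.hasSum_fourier_series_of_summable two_pi_pos (by fun_prop)
    (summable_fourierCoeffOn_of_contDiff two_pi_pos hsmooth hper) θ
  simp only [fourierCoeffOn_exp_mul_sin_eq_besselJ] at this
  convert this using 4 with n
  push_cast
  field_simp

/-- The FM-synthesis signal `sin(ω_c t + I sin(ω_m t))` decomposes as a
convergent series of sinusoids with frequencies `ω_c + n ω_m` weighted by
Bessel coefficients `J_n(I)`. -/
theorem fm_bessel_expansion (ωc ωm I t : ℝ) :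
    HasSum (fun n : ℤ => besselJ n I * Real.sin ((ωc + n * ωm) * t))
      (Real.sin (ωc * t + I * Real.sin (ωm * t))) := by
  have h := hasSum_im
    ((hasSum_besselJ_mul_exp I (ωm * t)).mul_left (cexp (↑(ωc * t) * Complex.I)))
  have him : ∀ a b : ℝ, (cexp (a * Complex.I) * cexp (b * Complex.I)).im = Real.sin (a + b) :=
    fun a b => by rw [← Complex.exp_add, ← add_mul, ← ofReal_add, exp_ofReal_mul_I_im]
  simp only [mul_left_comm _ (besselJ _ I : ℂ), im_ofReal_mul, him] at h
  convert h using 4 with n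
  ring
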